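/- arXiv:1203.2345 — 2 statements merged into one kernel-verified Lean document; each statement's English description precedes it below -/
import Mathlib

section
/- Let k > 2 be an even integer and let M₀ be a self-dual partial linear space with an involutive correlation κ₀. Then ⊛_{C_k}(∘, M₀) is isomorphic to the correlative multiplying ⊛_k(κ₀, M₀); an isomorphism is given by δ((i,x)) = (i,x) for even i and δ((i,x)) = (i, κ₀(x)) for odd i. -/
/-- A partial linear space: every line has at least two points, every point is on
at least two lines, and two distinct points are on at most one common line. -/
def IsPLS {P L : Type*} (inc : P → L → Prop) : Prop :=
  (∀ l, ∃ a b, a ≠ b ∧ inc a l ∧ inc b l) ∧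
  (∀ a, ∃ l m, l ≠ m ∧ inc a l ∧ inc a m) ∧
  (∀ a b l m, inc a l → inc b l → inc a m → inc b m → a = b ∨ l = m)

/-- An isomorphism of incidence structures. -/
structure IncIso {P₁ L₁ P₂ L₂ : Type*} (inc₁ : P₁ → L₁ → Prop) (inc₂ : P₂ → L₂ → Prop) where
  pt : P₁ ≃ P₂
  ln : L₁ ≃ L₂
  pres : ∀ a l, inc₁ a l ↔ inc₂ (pt a) (ln l)

/-- A correlation of one incidence structure onto another: a pair of bijections,
points to lines and lines to points, reversing incidence. -/
structure Correlation {P₀ L₀ P₁ L₁ : Type*} (inc₀ : P₀ → L₀ → Prop) (inc₁ : P₁ → L₁ → Prop) where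
  toLines : P₀ ≃ L₁
  toPoints : L₀ ≃ P₁
  rev : ∀ a l, inc₀ a l ↔ inc₁ (toPoints l) (toLines a)

/-- A closed substructure. -/
def IsClosedSub {P L : Type*} (inc : P → L → Prop) (B' : Set P) (B'' : Set L) : Prop :=
  (∀ a₁ a₂ l, a₁ ∈ B' → a₂ ∈ B' → a₁ ≠ a₂ → inc a₁ l → inc a₂ l → l ∈ B'') ∧
  (∀ l₁ l₂ a, l₁ ∈ B'' → l₂ ∈ B'' → l₁ ≠ l₂ → inc a l₁ → inc a l₂ → a ∈ B')

/-- One incidence step (within a substructure) between elements (points or lines). -/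
def IncStep {P L : Type*} (inc : P → L → Prop) (B' : Set P) (B'' : Set L) :
    (P ⊕ L) → (P ⊕ L) → Prop :=
  fun x y => ∃ a l, a ∈ B' ∧ l ∈ B'' ∧ inc a l ∧
    ((x = Sum.inl a ∧ y = Sum.inr l) ∨ (x = Sum.inr l ∧ y = Sum.inl a))

/-- Connectivity of a substructure: any two of its elements are joined by a finite
chain of incidences within it. -/
def SubConnected {P L : Type*} (inc : P → L → Prop) (B' : Set P) (B'' : Set L) : Prop :=
  ∀ x y : P ⊕ L, Sum.elim (· ∈ B') (· ∈ B'') x → Sum.elim (· ∈ B') (· ∈ B'') y →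
    Relation.ReflTransGen (IncStep inc B' B'') x y

/-- Connectivity of the whole incidence structure. -/
def ConnectedPLS {P L : Type*} (inc : P → L → Prop) : Prop :=
  SubConnected inc Set.univ Set.univ

/-- Collinearity of two points. -/
def Collin {P L : Type*} (inc : P → L → Prop) (a b : P) : Prop := ∃ l, inc a l ∧ inc b l

/-- A triangle: three pairwise collinear points which are not on a common line. -/
def IsTriangle {P L : Type*} (inc : P → L → Prop) (a b c : P) : Prop :=
  a ≠ b ∧ b ≠ c ∧ a ≠ c ∧ Collin inc a b ∧ Collin inc b c ∧ Collin inc a c ∧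
    ¬ ∃ l, inc a l ∧ inc b l ∧ inc c l

/-- The Shult axiom (Γ-space). -/
def Shultenian {P L : Type*} (inc : P → L → Prop) : Prop :=
  ∀ a b c d l, IsTriangle inc a b c → inc a l → inc b l → inc d l → Collin inc d c

/-- Degree of a point: the number of lines through it. -/
noncomputable def ptDeg {P L : Type*} (inc : P → L → Prop) (p : P) : ℕ :=
  Set.ncard {l | inc p l}

/-- Size of a line: the number of points on it. -/
noncomputable def lnSize {P L : Type*} (inc : P → L → Prop) (l : L) : ℕ :=
  Set.ncard {p | inc p l}

/-- `G` is a cyclic group (with distinguished generator `1`) which is either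
infinite or of even order greater than `2`. -/
def GoodGroup (G : Type*) [CommRing G] : Prop :=
  Nonempty (G ≃+* ℤ) ∨ ∃ k : ℕ, 2 < k ∧ Even k ∧ Nonempty (G ≃+* ZMod k)

/-- `I` is (as a cyclic group with generator `1`) either `ℤ` or `C_k`. -/
def CyclicIndex (I : Type*) [CommRing I] : Prop :=
  Nonempty (I ≃+* ℤ) ∨ ∃ k : ℕ, 0 < k ∧ Nonempty (I ≃+* ZMod k)

/-- Incidence on the disjoint union `S ⊕ L`, in either direction. -/
def dualInc {S L : Type*} (inc0 : S → L → Prop) : (S ⊕ L) → (S ⊕ L) → Prop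
  | Sum.inl a, Sum.inr b => inc0 a b
  | Sum.inr b, Sum.inl a => inc0 a b
  | _, _ => False

/-- Points of the multiplied structure `⊛_G(∘, M₀)`. -/
def starPt (G : Type*) [CommRing G] (S L : Type*) : Set (G × (S ⊕ L)) :=
  {p | (Even p.1 ∧ ∃ a : S, p.2 = Sum.inl a) ∨ (¬ Even p.1 ∧ ∃ l : L, p.2 = Sum.inr l)}

/-- Lines of the multiplied structure `⊛_G(∘, M₀)`. -/
def starLn (G : Type*) [CommRing G] (S L : Type*) : Set (G × (S ⊕ L)) :=
  {q | (Even q.1 ∧ ∃ l : L, q.2 = Sum.inr l) ∨ (¬ Even q.1 ∧ ∃ a : S, q.2 = Sum.inl a)}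

/-- Incidence of the multiplied structure `⊛_G(∘, M₀)`:
`(i,a) I [j,b]` iff (`i = j` and `a I₀ b` or `b I₀ a`) or (`i = j + 1` and `a = b`). -/
def starInc (G : Type*) [CommRing G] {S L : Type*} (inc0 : S → L → Prop) :
    ↥(starPt G S L) → ↥(starLn G S L) → Prop :=
  fun p l => (p.val.1 = l.val.1 ∧ dualInc inc0 p.val.2 l.val.2) ∨
    (p.val.1 = l.val.1 + 1 ∧ p.val.2 = l.val.2)

/-- The relation `⊹` on `⊛_G(∘, M₀)`: `p ⊹ l` iff `p I l` and `i = j + 1`. -/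
def starDod (G : Type*) [CommRing G] {S L : Type*} (inc0 : S → L → Prop)
    (p : ↥(starPt G S L)) (l : ↥(starLn G S L)) : Prop :=
  starInc G inc0 p l ∧ p.val.1 = l.val.1 + 1

/-- The relation `⊹₁`. -/
def dod1 {P L : Type*} (inc : P → L → Prop) (p : P) (l : L) : Prop :=
  inc p l ∧ ∃ q, q ≠ p ∧ inc q l ∧ ∀ k m n, l ≠ k → l ≠ m → l ≠ n → m ≠ n →
    inc q k → inc p m → inc p n → (∃ x, inc x k ∧ inc x m) → ¬ ∃ x, inc x k ∧ inc x n

/-- The relation `◁`: `a ◁ l` iff `a` is not on `l` and there is exactly one line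
through `a` missing `l`. -/
def corrRel {P L : Type*} (inc : P → L → Prop) (a : P) (l : L) : Prop :=
  ¬ inc a l ∧ ∃! m, inc a m ∧ ¬ ∃ x, inc x l ∧ inc x m

/-- The relation `⊹₂`. -/
def dod2 {P L : Type*} (inc : P → L → Prop) (p : P) (l : L) : Prop :=
  inc p l ∧ ∃ a, ¬ Collin inc p a ∧ corrRel inc a l

/-- The family `{B_i}` is a covering of the structure by connected closed
substructures satisfying conditions (1)-(7). -/
def GoodCover {P L I : Type*} (inc : P → L → Prop) (B' : I → Set P) (B'' : I → Set L) : Prop :=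
  (∀ p, ∃ i, p ∈ B' i) ∧ (∀ l, ∃ i, l ∈ B'' i) ∧
  (∀ i, IsClosedSub inc (B' i) (B'' i)) ∧
  (∀ i, SubConnected inc (B' i) (B'' i)) ∧
  (∀ i₁ i₂, (B' i₁ ∩ B' i₂).Nonempty → B' i₁ = B' i₂) ∧
  (∀ i₁ i₂, (B'' i₁ ∩ B'' i₂).Nonempty → B'' i₁ = B'' i₂) ∧
  (∀ i, ∀ d ∈ B' i, ∃ m, inc d m ∧ m ∉ B'' i) ∧
  (∀ i, ∀ m ∈ B'' i, ∃ d, inc d m ∧ d ∉ B' i) ∧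
  (∀ i, IsClosedSub inc (B' i)ᶜ (B'' i)ᶜ) ∧
  (∀ (i : I) (p : P) (m₁ m₂ m₃ : L) (d₁ d₂ d₃ : P),
    inc p m₁ → inc p m₂ → inc p m₃ → inc d₁ m₁ → inc d₂ m₂ → inc d₃ m₃ →
    m₁ ∈ B'' i → m₂ ∈ B'' i → m₃ ∈ B'' i → d₁ ∉ B' i → d₂ ∉ B' i → d₃ ∉ B' i →
    ∃ n, inc d₁ n ∧ inc d₂ n ∧ inc d₃ n) ∧
  (∀ (i : I) (n : L) (d₁ d₂ d₃ : P) (m₁ m₂ m₃ : L),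
    inc d₁ n → inc d₂ n → inc d₃ n → inc d₁ m₁ → inc d₂ m₂ → inc d₃ m₃ →
    d₁ ∈ B' i → d₂ ∈ B' i → d₃ ∈ B' i → m₁ ∉ B'' i → m₂ ∉ B'' i → m₃ ∉ B'' i →
    ∃ q, inc q m₁ ∧ inc q m₂ ∧ inc q m₃)

/-- The relation `ρ` on the index set: `j ρ i` iff `j ≠ i` and some line of `B''_j`
is incident with some point of `B'_i`. -/
def rhoRel {P L I : Type*} (inc : P → L → Prop) (B' : I → Set P) (B'' : I → Set L)
    (j i : I) : Prop :=
  j ≠ i ∧ ∃ l ∈ B'' j, ∃ a ∈ B' i, inc a l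

/-- The relation `⊹` determined by a covering: `a ⊹ m` iff `a I m` and no member of
the covering contains both `a` and `m`. -/
def dodRel {P L I : Type*} (inc : P → L → Prop) (B' : I → Set P) (B'' : I → Set L)
    (a : P) (m : L) : Prop :=
  inc a m ∧ ¬ ∃ i, a ∈ B' i ∧ m ∈ B'' i

/-- Incidence of the structure `⊛_{i∈I}(M_i, φ_i)` obtained by glueing the family
`(M_i)` along the correlations `φ_i`. -/
def glueInc {I : Type*} [CommRing I] {P Lf : I → Type*} (inc : ∀ i, P i → Lf i → Prop)
    (φ : ∀ i, Correlation (inc i) (inc (i + 1))) :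
    (Σ i, P i) → (Σ i, Lf i) → Prop :=
  fun p l => (∃ (i : I) (a : P i) (m : Lf i), p = ⟨i, a⟩ ∧ l = ⟨i, m⟩ ∧ inc i a m) ∨
    (∃ (j : I) (m : Lf j), p = ⟨j + 1, (φ j).toPoints m⟩ ∧ l = ⟨j, m⟩)

/-- The composite `φ_{n-1} ∘ ⋯ ∘ φ_1 ∘ φ_0` acting on the elements of `M₀`. -/
def corrChain {I : Type*} [CommRing I] {P Lf : I → Type*} (inc : ∀ i, P i → Lf i → Prop)
    (φ : ∀ i, Correlation (inc i) (inc (i + 1))) :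
    (n : ℕ) → (P 0 ⊕ Lf 0) → (P (n : I) ⊕ Lf (n : I))
  | 0 => cast (by rw [Nat.cast_zero])
  | n + 1 => fun x =>
      cast (by rw [Nat.cast_add_one])
        (Sum.elim (fun a => Sum.inr ((φ (n : I)).toLines a))
          (fun m => Sum.inl ((φ (n : I)).toPoints m)) (corrChain inc φ n x))

/-- The correlative multiplying `⊛_k(κ₀, M₀)`. -/
def corInc {S L : Type*} (k : ℕ) (inc0 : S → L → Prop) (kap : L → S) :
    ZMod k × S → ZMod k × L → Prop :=
  fun p l => (p.1 = l.1 ∧ inc0 p.2 l.2) ∨ (p.1 = l.1 + 1 ∧ p.2 = kap l.2)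

/-!
In both structures the layer over `i ∈ C_k` is a copy of `M₀`, taken dually in
`⊛_{C_k}(∘, M₀)` when `i` is odd; the involutive correlation `κ₀` turns those dual layers back
into copies of `M₀`. Because `k` is even, parity is well defined on `C_k` and `i = j + 1`
forces `i`, `j` to have opposite parities, so the incidences between consecutive layers,
`(i, x) I [i - 1, x]`, become exactly the incidences `(i, κ₀ l) I [i - 1, l]` of the
correlative multiplying.
-/

theorem ZMod.even_intCast_iff {k : ℕ} (hk : 2 ∣ k) (n : ℤ) : Even (n : ZMod k) ↔ Even n := by
  refine ⟨fun h => ?_, Even.intCast⟩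
  obtain ⟨r, hr⟩ := h.map (ZMod.castHom hk (ZMod 2))
  rw [map_intCast, CharTwo.add_self_eq_zero] at hr
  exact ZMod.intCast_eq_zero_iff_even.mp hr

theorem ZMod.even_add_one_iff_not_even {k : ℕ} (hk : Even k) (x : ZMod k) :
    Even (x + 1) ↔ ¬ Even x := by
  obtain ⟨n, rfl⟩ := ZMod.intCast_surjective x
  rw [← Int.cast_one, ← Int.cast_add, ZMod.even_intCast_iff hk.two_dvd,
    ZMod.even_intCast_iff hk.two_dvd, Int.even_add_one]

section StarEquiv

open Classical

variable (G : Type*) [CommRing G] {S L : Type*} (e : S ≃ L)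

noncomputable def starPtEquiv : starPt G S L ≃ G × S where
  toFun p := (p.1.1, p.1.2.elim id e.symm)
  invFun q :=
    if h : Even q.1 then ⟨(q.1, .inl q.2), .inl ⟨h, q.2, rfl⟩⟩
    else ⟨(q.1, .inr (e q.2)), .inr ⟨h, e q.2, rfl⟩⟩
  left_inv := by
    rintro ⟨⟨i, x⟩, hp⟩
    obtain ⟨hi, a, rfl⟩ | ⟨hi, b, rfl⟩ := id hp <;> simp [hi]
  right_inv := by
    rintro ⟨i, a⟩
    by_cases hi : Even i <;> simp [hi]

noncomputable def starLnEquiv : starLn G S L ≃ G × L where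
  toFun l := (l.1.1, l.1.2.elim e id)
  invFun q :=
    if h : Even q.1 then ⟨(q.1, .inr q.2), .inl ⟨h, q.2, rfl⟩⟩
    else ⟨(q.1, .inl (e.symm q.2)), .inr ⟨h, e.symm q.2, rfl⟩⟩
  left_inv := by
    rintro ⟨⟨i, x⟩, hl⟩
    obtain ⟨hi, b, rfl⟩ | ⟨hi, a, rfl⟩ := id hl <;> simp [hi]
  right_inv := by
    rintro ⟨i, b⟩
    by_cases hi : Even i <;> simp [hi]

end StarEquiv

theorem Correlation.toPoints_eq_toLines_symm {S L : Type*} {inc0 : S → L → Prop}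
    (κ : Correlation inc0 inc0) (hκ : ∀ l, κ.toLines (κ.toPoints l) = l) :
    ⇑κ.toPoints = κ.toLines.symm :=
  funext fun l => κ.toLines.eq_symm_apply.mpr (hκ l)

theorem starInc_iff_corInc {k : ℕ} (hk : Even k) {S L : Type*} {inc0 : S → L → Prop}
    (κ : Correlation inc0 inc0) (hκ : ∀ l, κ.toLines (κ.toPoints l) = l)
    (p : starPt (ZMod k) S L) (l : starLn (ZMod k) S L) :
    starInc (ZMod k) inc0 p l ↔
      corInc k inc0 κ.toPoints (starPtEquiv _ κ.toLines p) (starLnEquiv _ κ.toLines l) := by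
  have hsymm := κ.toPoints_eq_toLines_symm hκ
  have hrev : ∀ a l, inc0 (κ.toLines.symm l) (κ.toLines a) ↔ inc0 a l := by
    intro a l
    rw [← hsymm, ← κ.rev]
  -- `i = j + 1` forces opposite parities, which rules out every mismatched case below.
  have hstep : ∀ i j : ZMod k, i = j + 1 → (Even i ↔ ¬ Even j) := by
    rintro i j rfl
    exact ZMod.even_add_one_iff_not_even hk j
  obtain ⟨⟨i, x⟩, hp⟩ := p
  obtain ⟨⟨j, y⟩, hl⟩ := l
  obtain ⟨hi, a, rfl⟩ | ⟨hi, b, rfl⟩ := id hp <;>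
    obtain ⟨hj, m, rfl⟩ | ⟨hj, c, rfl⟩ := id hl <;>
    simp only [starInc, corInc, dualInc, starPtEquiv, starLnEquiv, Equiv.coe_fn_mk, Sum.elim_inl,
      Sum.elim_inr, id_eq, Sum.inl.injEq, Sum.inr.injEq, reduceCtorEq, hsymm, hrev,
      Equiv.symm_apply_apply, EmbeddingLike.apply_eq_iff_eq] <;>
    grind

theorem star_iso_correlative_multiplying_general (k : ℕ) (hke : Even k)
    {S L : Type} (inc0 : S → L → Prop)
    (κ₀ : Correlation inc0 inc0)
    (hinv2 : ∀ l, κ₀.toLines (κ₀.toPoints l) = l) :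
    ∃ δ : IncIso (starInc (ZMod k) inc0) (corInc k inc0 κ₀.toPoints),
      (∀ (p : ↥(starPt (ZMod k) S L)) (a : S),
        p.val.2 = Sum.inl a → δ.pt p = (p.val.1, a)) ∧
      (∀ (p : ↥(starPt (ZMod k) S L)) (b : L),
        p.val.2 = Sum.inr b → δ.pt p = (p.val.1, κ₀.toPoints b)) ∧
      (∀ (l : ↥(starLn (ZMod k) S L)) (b : L),
        l.val.2 = Sum.inr b → δ.ln l = (l.val.1, b)) ∧
      (∀ (l : ↥(starLn (ZMod k) S L)) (a : S),
        l.val.2 = Sum.inl a → δ.ln l = (l.val.1, κ₀.toLines a)) := by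
  refine ⟨⟨starPtEquiv _ κ₀.toLines, starLnEquiv _ κ₀.toLines, starInc_iff_corInc hke κ₀ hinv2⟩,
    ?_, ?_, ?_, ?_⟩
  all_goals rintro ⟨⟨i, x⟩, _⟩ _ (rfl : x = _)
  · rfl
  · simp [starPtEquiv, κ₀.toPoints_eq_toLines_symm hinv2]
  · rfl
  · rfl

/-- for even `k > 2` and a self-dual PLS `M₀` with involutive
correlation `κ₀`, `⊛_{C_k}(∘, M₀) ≅ ⊛_k(κ₀, M₀)`, via `δ((i,x)) = (i,x)` for even
`i` and `δ((i,x)) = (i, κ₀(x))` for odd `i`. -/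
theorem star_iso_correlative_multiplying (k : ℕ) (hk : 2 < k) (hke : Even k)
    {S L : Type} (inc0 : S → L → Prop) (hPLS : IsPLS inc0)
    (κ₀ : Correlation inc0 inc0)
    (hinv1 : ∀ a, κ₀.toPoints (κ₀.toLines a) = a)
    (hinv2 : ∀ l, κ₀.toLines (κ₀.toPoints l) = l) :
    ∃ δ : IncIso (starInc (ZMod k) inc0) (corInc k inc0 κ₀.toPoints),
      (∀ (p : ↥(starPt (ZMod k) S L)) (a : S),
        p.val.2 = Sum.inl a → δ.pt p = (p.val.1, a)) ∧
      (∀ (p : ↥(starPt (ZMod k) S L)) (b : L),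
        p.val.2 = Sum.inr b → δ.pt p = (p.val.1, κ₀.toPoints b)) ∧
      (∀ (l : ↥(starLn (ZMod k) S L)) (b : L),
        l.val.2 = Sum.inr b → δ.ln l = (l.val.1, b)) ∧
      (∀ (l : ↥(starLn (ZMod k) S L)) (a : S),
        l.val.2 = Sum.inl a → δ.ln l = (l.val.1, κ₀.toLines a)) :=
  star_iso_correlative_multiplying_general k hke inc0 κ₀ hinv2
end

section
/- Let M₀ be a finite partial linear space in which every point has the same degree κ and every line the same size ρ, with ρ ≠ κ, and let G be a cyclic group that is either infinite or of even order greater than 2. Then for each point p and each line l of ⊛_G(∘, M₀): p ⊹ l if and only if p is incident with l and rank(p) = rank(l). -/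
/-!
Every element `(i, x)` of `⊛_G(∘, M₀)` is incident with the elements of `M₀` incident with `x`,
placed at the same level `i`, and with exactly one more element, the copy of `x` at the adjacent
level. Hence its rank is `rank₀(x) + 1`. A `⊹`-incidence joins two copies of the same `x`, so the
ranks agree; an incidence inside a level joins a point and a line of `M₀`, with ranks `κ + 1` and
`ρ + 1`. The hypothesis on `G` makes evenness a genuine parity (`G` is generated by `1` and maps
onto `ZMod 2`), so adjacent levels have opposite parities and are distinct.
-/

namespace GoodGroup

variable {G : Type*} [CommRing G]

lemma intCast_surjective (hG : GoodGroup G) : Function.Surjective (Int.cast : ℤ → G) := by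
  rcases hG with he | ⟨k, -, -, ⟨e⟩⟩
  · obtain ⟨e⟩ := he
    intro x
    exact ⟨e x, by rw [← map_intCast e.symm, Int.cast_id, e.symm_apply_apply]⟩
  · intro x
    obtain ⟨n, hn⟩ := ZMod.intCast_surjective (e x)
    exact ⟨n, by rw [← map_intCast e.symm, hn, e.symm_apply_apply]⟩

lemma nonempty_ringHom_zmod_two (hG : GoodGroup G) : Nonempty (G →+* ZMod 2) := by
  rcases hG with he | ⟨k, -, hk, ⟨e⟩⟩
  · obtain ⟨e⟩ := he
    exact ⟨(Int.castRingHom (ZMod 2)).comp e.toRingHom⟩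
  · exact ⟨(ZMod.castHom hk.two_dvd (ZMod 2)).comp e.toRingHom⟩

lemma even_add_one_iff (hG : GoodGroup G) (x : G) : Even (x + 1) ↔ ¬ Even x := by
  obtain ⟨f⟩ := hG.nonempty_ringHom_zmod_two
  have not_even_one : ¬ Even (1 : G) := by
    rintro ⟨r, hr⟩
    have hf := congrArg f hr
    rw [map_one, map_add] at hf
    generalize f r = t at hf
    fin_cases t <;> exact absurd hf (by decide)
  refine ⟨fun hx1 hx => not_even_one (by simpa using hx1.sub hx), fun hx => ?_⟩
  obtain ⟨n, rfl⟩ := hG.intCast_surjective x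
  rcases Int.even_or_odd n with hn | hn
  · exact absurd (hn.intCast (α := G)) hx
  · exact_mod_cast hn.add_one.intCast (α := G)

lemma add_one_ne_self (hG : GoodGroup G) (x : G) : x + 1 ≠ x := by
  intro h
  have := hG.even_add_one_iff 0
  simp_all

end GoodGroup

section Star

variable {G : Type*} [CommRing G] {S L : Type*} (inc0 : S → L → Prop)

noncomputable def baseRank : S ⊕ L → ℕ := Sum.elim (ptDeg inc0) (lnSize inc0)

lemma dualInc_comm {x y : S ⊕ L} : dualInc inc0 x y ↔ dualInc inc0 y x := by
  cases x <;> cases y <;> rfl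

lemma ncard_dualInc (x : S ⊕ L) : {y | dualInc inc0 x y}.ncard = baseRank inc0 x := by
  cases x with
  | inl a =>
    have h : {y | dualInc inc0 (.inl a) y} = Sum.inr '' {m | inc0 a m} := by
      ext (b | m) <;> simp [dualInc]
    rw [h, Set.ncard_image_of_injective _ Sum.inr_injective]
    rfl
  | inr m =>
    have h : {y | dualInc inc0 (.inr m) y} = Sum.inl '' {a | inc0 a m} := by
      ext (a | n) <;> simp [dualInc]
    rw [h, Set.ncard_image_of_injective _ Sum.inl_injective]
    rfl

lemma baseRank_ne_of_dualInc {κ ρ : ℕ} (hdeg : ∀ a, ptDeg inc0 a = κ)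
    (hsize : ∀ l, lnSize inc0 l = ρ) (hne : ρ ≠ κ) {x y : S ⊕ L} (h : dualInc inc0 x y) :
    baseRank inc0 x ≠ baseRank inc0 y := by
  cases x <;> cases y <;> simp_all [dualInc, baseRank, Ne.symm hne]

lemma mem_starLn_iff (hG : GoodGroup G) {z : G × (S ⊕ L)} :
    z ∈ starLn G S L ↔ (z.1 + 1, z.2) ∈ starPt G S L := by
  obtain ⟨i, a | m⟩ := z <;> simp [starPt, starLn, hG.even_add_one_iff]

variable {inc0}

lemma mem_starLn_of_dualInc {z : G × (S ⊕ L)} (hz : z ∈ starPt G S L) {y : S ⊕ L}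
    (h : dualInc inc0 z.2 y) : (z.1, y) ∈ starLn G S L := by
  obtain ⟨i, a | m⟩ := z <;> cases y <;> simp_all [starPt, starLn, dualInc]

lemma mem_starPt_of_dualInc {z : G × (S ⊕ L)} (hz : z ∈ starLn G S L) {x : S ⊕ L}
    (h : dualInc inc0 x z.2) : (z.1, x) ∈ starPt G S L := by
  obtain ⟨i, a | m⟩ := z <;> cases x <;> simp_all [starPt, starLn, dualInc]

lemma image_val_setOf_starInc_left (hG : GoodGroup G) (p : ↥(starPt G S L)) :
    Subtype.val '' {l | starInc G inc0 p l} =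
      insert (p.val.1 - 1, p.val.2) (Prod.mk p.val.1 '' {y | dualInc inc0 p.val.2 y}) := by
  obtain ⟨⟨i, x⟩, hp⟩ := p
  ext ⟨j, y⟩
  constructor
  · rintro ⟨⟨_, hl⟩, ⟨hj, hxy⟩ | ⟨hj, rfl⟩, rfl⟩
    · exact Or.inr ⟨y, hxy, by simp_all⟩
    · exact Or.inl (Prod.ext (eq_sub_of_add_eq hj.symm) rfl)
  · rintro (h | ⟨y, hxy, h⟩) <;> simp only [Prod.mk.injEq] at h <;> obtain ⟨rfl, rfl⟩ := h
    · exact ⟨⟨(i - 1, y), (mem_starLn_iff hG).2 (by simpa only [sub_add_cancel] using hp)⟩,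
        Or.inr ⟨(sub_add_cancel i 1).symm, rfl⟩, rfl⟩
    · exact ⟨⟨_, mem_starLn_of_dualInc hp hxy⟩, Or.inl ⟨rfl, hxy⟩, rfl⟩

lemma image_val_setOf_starInc_right (hG : GoodGroup G) (l : ↥(starLn G S L)) :
    Subtype.val '' {p | starInc G inc0 p l} =
      insert (l.val.1 + 1, l.val.2) (Prod.mk l.val.1 '' {x | dualInc inc0 l.val.2 x}) := by
  obtain ⟨⟨j, y⟩, hl⟩ := l
  ext ⟨i, x⟩
  constructor
  · rintro ⟨⟨_, hp⟩, ⟨hi, hxy⟩ | ⟨hi, rfl⟩, rfl⟩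
    · exact Or.inr ⟨x, (dualInc_comm inc0).1 hxy, by simp_all⟩
    · exact Or.inl (Prod.ext hi rfl)
  · rintro (h | ⟨x, hyx, h⟩) <;> simp only [Prod.mk.injEq] at h <;> obtain ⟨rfl, rfl⟩ := h
    · exact ⟨⟨_, (mem_starLn_iff hG).1 hl⟩, Or.inr ⟨rfl, rfl⟩, rfl⟩
    · have hxy := (dualInc_comm inc0).1 hyx
      exact ⟨⟨_, mem_starPt_of_dualInc hl hxy⟩, Or.inl ⟨rfl, hxy⟩, rfl⟩

variable [Finite S] [Finite L]

lemma ptDeg_starInc (hG : GoodGroup G) (p : ↥(starPt G S L)) :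
    ptDeg (starInc G inc0) p = baseRank inc0 p.val.2 + 1 := by
  have hnew : (p.val.1 - 1, p.val.2) ∉ Prod.mk p.val.1 '' {y | dualInc inc0 p.val.2 y} := by
    rintro ⟨y, -, h⟩
    exact hG.add_one_ne_self (p.val.1 - 1) (by simpa using congrArg Prod.fst h)
  rw [ptDeg, ← Set.ncard_image_of_injective _ Subtype.val_injective,
    image_val_setOf_starInc_left hG, Set.ncard_insert_of_notMem hnew (Set.toFinite _),
    Set.ncard_image_of_injective _ (Prod.mk_right_injective _), ncard_dualInc]

lemma lnSize_starInc (hG : GoodGroup G) (l : ↥(starLn G S L)) :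
    lnSize (starInc G inc0) l = baseRank inc0 l.val.2 + 1 := by
  have hnew : (l.val.1 + 1, l.val.2) ∉ Prod.mk l.val.1 '' {x | dualInc inc0 l.val.2 x} := by
    rintro ⟨x, -, h⟩
    exact hG.add_one_ne_self l.val.1 (congrArg Prod.fst h).symm
  rw [lnSize, ← Set.ncard_image_of_injective _ Subtype.val_injective,
    image_val_setOf_starInc_right hG, Set.ncard_insert_of_notMem hnew (Set.toFinite _),
    Set.ncard_image_of_injective _ (Prod.mk_right_injective _), ncard_dualInc]

end Star

lemma starInc.snd_eq_of_fst_eq_add_one {G : Type*} [CommRing G] (hG : GoodGroup G) {S L : Type*}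
    {inc0 : S → L → Prop} {p : ↥(starPt G S L)} {l : ↥(starLn G S L)}
    (h : starInc G inc0 p l) (hstep : p.val.1 = l.val.1 + 1) : p.val.2 = l.val.2 := by
  rcases h with ⟨hsame, -⟩ | ⟨-, h⟩
  · exact absurd (hsame.symm.trans hstep).symm (hG.add_one_ne_self _)
  · exact h

theorem star_dod_iff_rank_eq_general {G : Type} [CommRing G] (hG : GoodGroup G)
    {S L : Type} [Finite S] [Finite L] (inc0 : S → L → Prop)
    (κ ρ : ℕ) (hdeg : ∀ a, ptDeg inc0 a = κ) (hsize : ∀ l, lnSize inc0 l = ρ)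
    (hne : ρ ≠ κ) :
    ∀ (p : ↥(starPt G S L)) (l : ↥(starLn G S L)),
      starDod G inc0 p l ↔
        (starInc G inc0 p l ∧ ptDeg (starInc G inc0) p = lnSize (starInc G inc0) l) := by
  intro p l
  rw [starDod, ptDeg_starInc hG, lnSize_starInc hG, Nat.add_right_cancel_iff]
  constructor
  · rintro ⟨hinc, hstep⟩
    exact ⟨hinc, by rw [hinc.snd_eq_of_fst_eq_add_one hG hstep]⟩
  · rintro ⟨hinc | hinc, hrank⟩
    · exact absurd hrank (baseRank_ne_of_dualInc inc0 hdeg hsize hne hinc.2)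
    · exact ⟨Or.inr hinc, hinc.1⟩

/-- if `M₀` is a finite PLS with constant point degree `κ` and constant
line size `ρ ≠ κ`, then in `⊛_G(∘, M₀)` one has `p ⊹ l` iff `p I l` and
`rank(p) = rank(l)`. -/
theorem star_dod_iff_rank_eq {G : Type} [CommRing G] (hG : GoodGroup G)
    {S L : Type} [Finite S] [Finite L] (inc0 : S → L → Prop) (hPLS : IsPLS inc0)
    (κ ρ : ℕ) (hdeg : ∀ a, ptDeg inc0 a = κ) (hsize : ∀ l, lnSize inc0 l = ρ)
    (hne : ρ ≠ κ) :
    ∀ (p : ↥(starPt G S L)) (l : ↥(starLn G S L)),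
      starDod G inc0 p l ↔
        (starInc G inc0 p l ∧ ptDeg (starInc G inc0) p = lnSize (starInc G inc0) l) :=
  star_dod_iff_rank_eq_general hG inc0 κ ρ hdeg hsize hne
end
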